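/- arXiv:2512.13255 — 4 statements merged into one kernel-verified Lean document; each statement's English description precedes it below -/
import Mathlib

section
/- Let E be a real vector space and x₀, x₁ ∈ E linearly independent. Let (α, σ) be an SI scheduler (α(0)=0, α(1)=1, σ(0)=1, σ(1)=0) with σ(t) > 0 for all t ∈ [0,1) and ρ = α/σ strictly increasing on [0,1). Fix integers M ≥ 2 and n ≥ M, and nodes 0 = s_0 < s_1 < ⋯ < s_M = 1. Define the LD3 trajectory space 𝒳_LD3 = { (α(t_k)·x₁ + σ(t_k)·x₀)_{k=0,…,M} : 0 = t_0 < t_1 < ⋯ < t_M = 1 } ⊆ E^{M+1}, and the BézierFlow trajectory space 𝒳_BF = { (c_k·(α(τ_k)·x₁ + σ(τ_k)·x₀))_{k=0,…,M} : there exist control points A_0,…,A_n and S_0,…,S_n ∈ ℝ with A_0 = 0, A_n = 1, S_0 = 1, S_n = 0 defining degree-n Bézier functions ᾱ(λ) = Σᵢ b_{i,n}(λ)·A_i and σ̄(λ) = Σᵢ b_{i,n}(λ)·S_i, together with τ_0,…,τ_M ∈ [0,1] and c_0,…,c_M ∈ ℝ such that τ_0 = 0, τ_M = 1, c_0 = c_M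 = 1, and for every 0 < k < M: σ̄(s_k) > 0, τ_k ∈ [0,1), α(τ_k)/σ(τ_k) = ᾱ(s_k)/σ̄(s_k), and c_k = σ̄(s_k)/σ(τ_k) }. Then 𝒳_LD3 is a strict subset of 𝒳_BF: 𝒳_LD3 ⊊ 𝒳_BF. -/
/-- Bernstein basis polynomial `b_{i,n}(λ) = (n choose i) (1-λ)^(n-i) λ^i`. -/
noncomputable def bern (n i : ℕ) (l : ℝ) : ℝ :=
  (n.choose i : ℝ) * (1 - l) ^ (n - i) * l ^ i

/-- Degree-`n` Bézier function with control points `C`. -/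
noncomputable def bez {n : ℕ} (C : Fin (n + 1) → ℝ) (l : ℝ) : ℝ :=
  ∑ i : Fin (n + 1), bern n i.val l * C i

lemma bern_sum_choose (n j : ℕ) (hj : j ≤ n) (x : ℝ) :
    ∑ i ∈ Finset.range (n+1), bern n i x * (i.choose j : ℝ)
      = (n.choose j : ℝ) * x ^ j := by
  have step1 : ∑ i ∈ Finset.range (n+1), bern n i x * (i.choose j : ℝ)
      = ∑ i ∈ Finset.Ico j (n+1), bern n i x * (i.choose j : ℝ) := by
    refine (Finset.sum_subset ?_ ?_).symm
    · intro i hi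
      simp only [Finset.mem_Ico] at hi
      exact Finset.mem_range.mpr hi.2
    · intro i hi hni
      simp only [Finset.mem_range] at hi
      simp only [Finset.mem_Ico, not_and, not_lt] at hni
      have : i < j := by omega
      rw [Nat.choose_eq_zero_of_lt this]
      simp
  rw [step1, Finset.sum_Ico_eq_sum_range]
  have hrw : n + 1 - j = (n - j) + 1 := by omega
  rw [hrw]
  have key : ∀ m ∈ Finset.range ((n-j)+1),
      bern n (j + m) x * ((j+m).choose j : ℝ)
        = (n.choose j : ℝ) * x ^ j * (((n-j).choose m : ℝ) * x ^ m * (1-x)^((n-j)-m)) := by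
    intro m hm
    simp only [Finset.mem_range] at hm
    have hjm : j + m ≤ n := by omega
    have hid : n.choose (j+m) * (j+m).choose j = n.choose j * (n-j).choose m := by
      have := Nat.choose_mul (n := n) (Nat.le_add_right j m)
      simpa using this
    have hid' : (n.choose (j+m) : ℝ) * ((j+m).choose j : ℝ)
        = (n.choose j : ℝ) * ((n-j).choose m : ℝ) := by exact_mod_cast congrArg Nat.cast hid
    rw [bern]
    have hexp : n - (j + m) = (n - j) - m := by omega
    rw [hexp, pow_add]
    linear_combination ((1 - x) ^ (n - j - m) * (x ^ j * x ^ m)) * hid'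
  rw [Finset.sum_congr rfl key, ← Finset.mul_sum]
  have : ∑ m ∈ Finset.range ((n-j)+1), ((n-j).choose m : ℝ) * x ^ m * (1-x)^((n-j)-m) = 1 := by
    have h0 := add_pow x (1-x) (n-j)
    simp only [add_sub_cancel, one_pow] at h0
    have h2 : ∑ m ∈ Finset.range ((n-j)+1), ((n-j).choose m : ℝ) * x ^ m * (1-x)^((n-j)-m)
        = ∑ m ∈ Finset.range ((n-j)+1), x ^ m * (1-x)^((n-j)-m) * ((n-j).choose m : ℝ) :=
      Finset.sum_congr rfl fun m hm => by ring
    rw [h2, ← h0]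
  rw [this, mul_one]

lemma exists_control {n : ℕ} (p : Polynomial ℝ) (hp : p.natDegree < n + 1) :
    ∃ C : Fin (n+1) → ℝ, ∀ x, bez C x = p.eval x := by
  refine ⟨fun i => ∑ j ∈ Finset.range (n+1),
      p.coeff j * (i.val.choose j : ℝ) / (n.choose j : ℝ), fun x => ?_⟩
  rw [Polynomial.eval_eq_sum_range' hp, bez]
  rw [Fin.sum_univ_eq_sum_range (fun m => bern n m x *
      ∑ j ∈ Finset.range (n+1), p.coeff j * (m.choose j : ℝ) / (n.choose j : ℝ))]
  calc ∑ i ∈ Finset.range (n+1), bern n i x *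
        ∑ j ∈ Finset.range (n+1), p.coeff j * (i.choose j : ℝ) / (n.choose j : ℝ)
      = ∑ i ∈ Finset.range (n+1), ∑ j ∈ Finset.range (n+1),
          p.coeff j / (n.choose j : ℝ) * (bern n i x * (i.choose j : ℝ)) := by
        refine Finset.sum_congr rfl fun i _ => ?_
        rw [Finset.mul_sum]
        exact Finset.sum_congr rfl fun j _ => by ring
    _ = ∑ j ∈ Finset.range (n+1), p.coeff j / (n.choose j : ℝ) *
          ∑ i ∈ Finset.range (n+1), bern n i x * (i.choose j : ℝ) := by
        rw [Finset.sum_comm]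
        exact Finset.sum_congr rfl fun j _ => by rw [Finset.mul_sum]
    _ = ∑ j ∈ Finset.range (n+1), p.coeff j * x ^ j := by
        refine Finset.sum_congr rfl fun j hj => ?_
        have hjn : j ≤ n := by simpa [Nat.lt_succ_iff] using hj
        rw [bern_sum_choose n j hjn x]
        have hne : ((n.choose j : ℝ)) ≠ 0 := by
          exact_mod_cast (Nat.choose_pos hjn).ne'
        field_simp

lemma bez_zero {n : ℕ} (C : Fin (n+1) → ℝ) : bez C 0 = C 0 := by
  rw [bez]
  rw [Finset.sum_eq_single 0]
  · simp [bern]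
  · intro i _ hi
    have : i.val ≠ 0 := fun h => hi (Fin.ext h)
    simp [bern, zero_pow this]
  · simp

lemma bez_one {n : ℕ} (C : Fin (n+1) → ℝ) : bez C 1 = C (Fin.last n) := by
  rw [bez]
  rw [Finset.sum_eq_single (Fin.last n)]
  · simp [bern]
  · intro i _ hi
    have h1 : i.val < n := by
      have := i.isLt
      have : i.val ≠ n := fun h => hi (Fin.ext (by simp [h]))
      omega
    have : n - i.val ≠ 0 := by omega
    simp [bern, sub_self, zero_pow this]
  · simp

lemma exists_bez_interp {n M : ℕ} (hn : M ≤ n) (s : Fin (M+1) → ℝ)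
    (hs : Function.Injective s) (w : Fin (M+1) → ℝ) :
    ∃ C : Fin (n+1) → ℝ, ∀ k, bez C (s k) = w k := by
  set p := Lagrange.interpolate Finset.univ s w with hp
  have hinj : Set.InjOn s ↑(Finset.univ : Finset (Fin (M+1))) := hs.injOn
  have hdeg : p.degree < (Finset.univ : Finset (Fin (M+1))).card :=
    Lagrange.degree_interpolate_lt _ hinj
  have hnd : p.natDegree < n + 1 := by
    rcases eq_or_ne p 0 with h | h
    · simp [h]
    · have := (Polynomial.natDegree_lt_iff_degree_lt h).mpr
        (lt_of_lt_of_le hdeg (by simp; exact_mod_cast by exact_mod_cast Nat.add_le_add_right hn 1))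
      exact this
  obtain ⟨C, hC⟩ := exists_control p hnd
  exact ⟨C, fun k => by
    rw [hC, hp, Lagrange.eval_interpolate_at_node _ hinj (Finset.mem_univ k)]⟩

lemma coeff_eq {E : Type*} [AddCommGroup E] [Module ℝ E] {x₀ x₁ : E}
    (h : LinearIndependent ℝ ![x₀, x₁]) {a b a' b' : ℝ}
    (heq : a • x₁ + b • x₀ = a' • x₁ + b' • x₀) : a = a' ∧ b = b' := by
  have h2 := Fintype.linearIndependent_iff.mp h ![b - b', a - a']
  have hsum : (∑ i : Fin 2, ![b - b', a - a'] i • ![x₀, x₁] i) = 0 := by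
    simp only [Fin.sum_univ_two, Matrix.cons_val_zero, Matrix.cons_val_one, Matrix.head_cons]
    rw [sub_smul, sub_smul, ← sub_eq_zero] at *
    rw [← sub_eq_zero] at heq
    rw [sub_eq_zero]
    rw [← sub_eq_zero]
    linear_combination (norm := module) heq
  have h0 := h2 hsum 0
  have h1 := h2 hsum 1
  simp at h0 h1
  constructor <;> linarith

lemma interior_bounds {M : ℕ} {t : Fin (M+1) → ℝ} (hmono : StrictMono t)
    (h0 : t 0 = 0) (h1 : t (Fin.last M) = 1) {k : Fin (M+1)}
    (hk0 : 0 < (k : ℕ)) (hkM : (k : ℕ) < M) : 0 < t k ∧ t k < 1 := by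
  constructor
  · rw [← h0]; exact hmono (Fin.lt_iff_val_lt_val.mpr (by simpa using hk0))
  · rw [← h1]; exact hmono (Fin.lt_iff_val_lt_val.mpr (by simpa using hkM))

/-- **Strict inclusion of the LD3 trajectory space in the BézierFlow trajectory space.** -/
theorem ld3_strict_subset_bezierflow
    {E : Type*} [AddCommGroup E] [Module ℝ E]
    (x₀ x₁ : E) (hindep : LinearIndependent ℝ ![x₀, x₁])
    (α σ : ℝ → ℝ)
    (hα0 : α 0 = 0) (hα1 : α 1 = 1) (hσ0 : σ 0 = 1) (hσ1 : σ 1 = 0)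
    (hσpos : ∀ t ∈ Set.Ico (0:ℝ) 1, 0 < σ t)
    (hρ : StrictMonoOn (fun t => α t / σ t) (Set.Ico 0 1))
    (M n : ℕ) (hM : 2 ≤ M) (hn : M ≤ n)
    (s : Fin (M + 1) → ℝ) (hs0 : s 0 = 0) (hsM : s (Fin.last M) = 1)
    (hsmono : StrictMono s) :
    {x : Fin (M + 1) → E | ∃ t : Fin (M + 1) → ℝ,
        StrictMono t ∧ t 0 = 0 ∧ t (Fin.last M) = 1 ∧
        ∀ k, x k = α (t k) • x₁ + σ (t k) • x₀}
    ⊂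
    {x : Fin (M + 1) → E |
        ∃ (A S : Fin (n + 1) → ℝ) (τ : Fin (M + 1) → ℝ) (c : Fin (M + 1) → ℝ),
        A 0 = 0 ∧ A (Fin.last n) = 1 ∧ S 0 = 1 ∧ S (Fin.last n) = 0 ∧
        τ 0 = 0 ∧ τ (Fin.last M) = 1 ∧ c 0 = 1 ∧ c (Fin.last M) = 1 ∧
        (∀ k : Fin (M + 1), 0 < (k : ℕ) → (k : ℕ) < M →
          0 < bez S (s k) ∧ τ k ∈ Set.Ico (0:ℝ) 1 ∧
          α (τ k) / σ (τ k) = bez A (s k) / bez S (s k) ∧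
          c k = bez S (s k) / σ (τ k)) ∧
        ∀ k, x k = c k • (α (τ k) • x₁ + σ (τ k) • x₀)} := by
  have hsinj : Function.Injective s := hsmono.injective
  -- subset
  have hsub : {x : Fin (M + 1) → E | ∃ t : Fin (M + 1) → ℝ,
        StrictMono t ∧ t 0 = 0 ∧ t (Fin.last M) = 1 ∧
        ∀ k, x k = α (t k) • x₁ + σ (t k) • x₀} ⊆
      {x : Fin (M + 1) → E |
        ∃ (A S : Fin (n + 1) → ℝ) (τ : Fin (M + 1) → ℝ) (c : Fin (M + 1) → ℝ),
        A 0 = 0 ∧ A (Fin.last n) = 1 ∧ S 0 = 1 ∧ S (Fin.last n) = 0 ∧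
        τ 0 = 0 ∧ τ (Fin.last M) = 1 ∧ c 0 = 1 ∧ c (Fin.last M) = 1 ∧
        (∀ k : Fin (M + 1), 0 < (k : ℕ) → (k : ℕ) < M →
          0 < bez S (s k) ∧ τ k ∈ Set.Ico (0:ℝ) 1 ∧
          α (τ k) / σ (τ k) = bez A (s k) / bez S (s k) ∧
          c k = bez S (s k) / σ (τ k)) ∧
        ∀ k, x k = c k • (α (τ k) • x₁ + σ (τ k) • x₀)} := by
    rintro x ⟨t, htmono, ht0, ht1, hxk⟩
    obtain ⟨A, hA⟩ := exists_bez_interp hn s hsinj (fun k => α (t k))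
    obtain ⟨S, hS⟩ := exists_bez_interp hn s hsinj (fun k => σ (t k))
    refine ⟨A, S, t, fun _ => 1, ?_, ?_, ?_, ?_, ht0, ht1, rfl, rfl, ?_, ?_⟩
    · have h := hA 0; rw [hs0, bez_zero] at h; rw [h, ht0, hα0]
    · have h := hA (Fin.last M); rw [hsM, bez_one] at h; rw [h, ht1, hα1]
    · have h := hS 0; rw [hs0, bez_zero] at h; rw [h, ht0, hσ0]
    · have h := hS (Fin.last M); rw [hsM, bez_one] at h; rw [h, ht1, hσ1]
    · intro k hk0 hkM
      obtain ⟨hlt0, hlt1⟩ := interior_bounds htmono ht0 ht1 hk0 hkM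
      have htmem : t k ∈ Set.Ico (0:ℝ) 1 := ⟨le_of_lt hlt0, hlt1⟩
      have hσk : 0 < σ (t k) := hσpos _ htmem
      refine ⟨by rw [hS k]; exact hσk, htmem, by rw [hA k, hS k], ?_⟩
      rw [hS k]
      exact (div_self hσk.ne').symm
    · intro k; rw [hxk k, one_smul]
  rw [Set.ssubset_iff_of_subset hsub]
  -- the witness
  set cS : Fin (M+1) → ℝ := fun k => if (k : ℕ) = 0 ∨ (k : ℕ) = M then 1 else 2 with hcS
  obtain ⟨A, hA⟩ := exists_bez_interp hn s hsinj (fun k => cS k * α (s k))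
  obtain ⟨S, hS⟩ := exists_bez_interp hn s hsinj (fun k => cS k * σ (s k))
  have hcS0 : cS 0 = 1 := by simp [hcS]
  have hcSM : cS (Fin.last M) = 1 := by simp [hcS]
  refine ⟨fun k => cS k • (α (s k) • x₁ + σ (s k) • x₀), ⟨A, S, s, cS,
      ?_, ?_, ?_, ?_, hs0, hsM, hcS0, hcSM, ?_, fun k => rfl⟩, ?_⟩
  · have h := hA 0; rw [hs0, bez_zero] at h; rw [h, hcS0, hα0, mul_zero]
  · have h := hA (Fin.last M); rw [hsM, bez_one] at h; rw [h, hcSM, hα1, one_mul]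
  · have h := hS 0; rw [hs0, bez_zero] at h; rw [h, hcS0, hσ0, mul_one]
  · have h := hS (Fin.last M); rw [hsM, bez_one] at h; rw [h, hcSM, hσ1, mul_zero]
  · intro k hk0 hkM
    have hcSk : cS k = 2 := by simp only [hcS]; rw [if_neg (by omega)]
    obtain ⟨hlt0, hlt1⟩ := interior_bounds hsmono hs0 hsM hk0 hkM
    have hsmem : s k ∈ Set.Ico (0:ℝ) 1 := ⟨le_of_lt hlt0, hlt1⟩
    have hσk : 0 < σ (s k) := hσpos _ hsmem
    refine ⟨?_, hsmem, ?_, ?_⟩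
    · rw [hS k, hcSk]; linarith
    · rw [hA k, hS k, hcSk, mul_div_mul_left _ _ (two_ne_zero)]
    · rw [hS k, hcSk, mul_div_assoc, div_self hσk.ne', mul_one]
  -- non-membership
  rintro ⟨t, htmono, ht0, ht1, hxk⟩
  have hk1lt : (1 : ℕ) < M + 1 := by omega
  set k1 : Fin (M+1) := ⟨1, hk1lt⟩ with hk1
  have hk1v : (k1 : ℕ) = 1 := rfl
  have hk10 : 0 < (k1 : ℕ) := by omega
  have hk1M : (k1 : ℕ) < M := by omega
  have hcSk1 : cS k1 = 2 := by simp only [hcS]; rw [if_neg (by omega)]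
  have h1 : cS k1 • (α (s k1) • x₁ + σ (s k1) • x₀) = α (t k1) • x₁ + σ (t k1) • x₀ := hxk k1
  rw [hcSk1] at h1
  have h2 : α (t k1) • x₁ + σ (t k1) • x₀
      = (2 * α (s k1)) • x₁ + (2 * σ (s k1)) • x₀ := by
    rw [← h1, smul_add, smul_smul, smul_smul]
  obtain ⟨hαeq, hσeq⟩ := coeff_eq hindep h2
  obtain ⟨hs1lt0, hs1lt1⟩ := interior_bounds hsmono hs0 hsM hk10 hk1M
  obtain ⟨ht1lt0, ht1lt1⟩ := interior_bounds htmono ht0 ht1 hk10 hk1M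
  have hsmem : s k1 ∈ Set.Ico (0:ℝ) 1 := ⟨le_of_lt hs1lt0, hs1lt1⟩
  have htmem : t k1 ∈ Set.Ico (0:ℝ) 1 := ⟨le_of_lt ht1lt0, ht1lt1⟩
  have hσs : 0 < σ (s k1) := hσpos _ hsmem
  have hσt : 0 < σ (t k1) := hσpos _ htmem
  have hρeq : α (t k1) / σ (t k1) = α (s k1) / σ (s k1) := by
    rw [hαeq, hσeq, mul_div_mul_left _ _ (two_ne_zero)]
  have hts : t k1 = s k1 := hρ.injOn htmem hsmem hρeq
  rw [hts] at hσeq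
  linarith
end

section
/- Let M and n be natural numbers with 1 ≤ M ≤ n, let 0 = s_0 < s_1 < ⋯ < s_M = 1 be distinct nodes in [0,1], and let v_0, …, v_M ∈ ℝ be arbitrary values. Then there exist control points C_0, …, C_n ∈ ℝ such that the degree-n Bézier function B(λ) = Σ_{i=0}^n b_{i,n}(λ)·C_i satisfies B(s_k) = v_k for every k = 0, …, M. In particular, a Bézier curve of degree n ≥ M can interpolate any M+1 prescribed values at M+1 distinct nodes. -/
lemma bern_sum_one (n : ℕ) (x : ℝ) :
    ∑ i ∈ Finset.range (n + 1), bern n i x = 1 := by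
  have h := add_pow x (1 - x) n
  simp only [add_sub_cancel, one_pow] at h
  rw [h]
  apply Finset.sum_congr rfl
  intro i _
  unfold bern
  ring

lemma bern_monomial (n j : ℕ) (hj : j ≤ n) (x : ℝ) :
    ∑ i ∈ Finset.range (n + 1), (i.choose j : ℝ) * bern n i x
      = (n.choose j : ℝ) * x ^ j := by
  have hzero : ∀ i ∈ Finset.range j, (i.choose j : ℝ) * bern n i x = 0 := by
    intro i hi
    rw [Finset.mem_range] at hi
    rw [Nat.choose_eq_zero_of_lt hi]
    simp
  rw [← Finset.sum_range_add_sum_Ico _ (Nat.le_succ_of_le hj),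
    Finset.sum_eq_zero hzero, zero_add,
    Finset.sum_Ico_eq_sum_range]
  have key : ∀ m ∈ Finset.range (n + 1 - j),
      ((j + m).choose j : ℝ) * bern n (j + m) x
        = (n.choose j : ℝ) * x ^ j * bern (n - j) m x := by
    intro m hm
    rw [Finset.mem_range] at hm
    have hjm : j + m ≤ n := by omega
    have hc : (n.choose (j + m) : ℝ) * ((j + m).choose j : ℝ)
        = (n.choose j : ℝ) * ((n - j).choose m : ℝ) := by
      have := Nat.choose_mul (n := n) (Nat.le_add_right j m)
      have h2 : (j + m) - j = m := by omega
      rw [h2] at this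
      exact_mod_cast congrArg (Nat.cast (R := ℝ)) this
    unfold bern
    have h3 : n - (j + m) = (n - j) - m := by omega
    rw [h3, pow_add]
    linear_combination (1 - x) ^ (n - j - m) * x ^ j * x ^ m * hc
  rw [Finset.sum_congr rfl key, ← Finset.mul_sum]
  have h4 : n + 1 - j = n - j + 1 := by omega
  rw [h4, bern_sum_one, mul_one]

/-- **Bézier interpolation.** A Bézier curve of degree `n ≥ M` can interpolate any
`M+1` prescribed values at `M+1` distinct nodes `0 = s_0 < ⋯ < s_M = 1`. -/
theorem bezier_interpolation (M n : ℕ) (hM : 1 ≤ M) (hn : M ≤ n)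
    (s : Fin (M + 1) → ℝ) (hs0 : s 0 = 0) (hsM : s (Fin.last M) = 1)
    (hsmono : StrictMono s)
    (v : Fin (M + 1) → ℝ) :
    ∃ C : Fin (n + 1) → ℝ,
      ∀ k : Fin (M + 1), (∑ i : Fin (n + 1), bern n i.val (s k) * C i) = v k := by
  have hinj : Set.InjOn s ↑(Finset.univ : Finset (Fin (M + 1))) :=
    fun a _ b _ h => hsmono.injective h
  set p := Lagrange.interpolate Finset.univ s v with hp
  have hdeg : p.natDegree ≤ n := by
    have h := Lagrange.degree_interpolate_le v hinj
    simp only [Finset.card_univ, Fintype.card_fin, Nat.add_sub_cancel] at h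
    exact le_trans (Polynomial.natDegree_le_of_degree_le h) hn
  have heval : ∀ k : Fin (M + 1), p.eval (s k) = v k := fun k =>
    Lagrange.eval_interpolate_at_node v hinj (Finset.mem_univ k)
  refine ⟨fun i => ∑ j ∈ Finset.range (n + 1),
      p.coeff j * (i.val.choose j : ℝ) / (n.choose j : ℝ), fun k => ?_⟩
  set x := s k with hx
  calc (∑ i : Fin (n + 1), bern n i.val x *
          ∑ j ∈ Finset.range (n + 1), p.coeff j * (i.val.choose j : ℝ) / (n.choose j : ℝ))
      = ∑ i ∈ Finset.range (n + 1), ∑ j ∈ Finset.range (n + 1),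
          (p.coeff j / (n.choose j : ℝ)) * ((i.choose j : ℝ) * bern n i x) := by
        rw [Fin.sum_univ_eq_sum_range (fun i => bern n i x *
          ∑ j ∈ Finset.range (n + 1), p.coeff j * (i.choose j : ℝ) / (n.choose j : ℝ)) (n + 1)]
        apply Finset.sum_congr rfl
        intro i _
        rw [Finset.mul_sum]
        apply Finset.sum_congr rfl
        intro j _
        ring
    _ = ∑ j ∈ Finset.range (n + 1), (p.coeff j / (n.choose j : ℝ)) *
          ∑ i ∈ Finset.range (n + 1), (i.choose j : ℝ) * bern n i x := by
        rw [Finset.sum_comm]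
        simp [Finset.mul_sum]
    _ = ∑ j ∈ Finset.range (n + 1), p.coeff j * x ^ j := by
        apply Finset.sum_congr rfl
        intro j hj
        rw [Finset.mem_range] at hj
        have hjn : j ≤ n := by omega
        rw [bern_monomial n j hjn x]
        have hne : (n.choose j : ℝ) ≠ 0 := by exact_mod_cast (Nat.choose_pos hjn).ne'
        field_simp
    _ = p.eval x := (Polynomial.eval_eq_sum_range' (Nat.lt_succ_of_le hdeg) x).symm
    _ = v k := heval k
end

section
/- Let E be a real vector space and let x₀, x₁ ∈ E be linearly independent. Let α, σ : [0,1] → ℝ satisfy the boundary conditions α(1) = 1 and σ(1) = 0, with σ(t) > 0 for all t ∈ [0,1), and suppose ρ = α/σ is strictly increasing on [0,1). Then for every t ∈ [0,1) and every real number c ≠ 1, the scaled point c·(α(t)·x₁ + σ(t)·x₀) does not lie on the source sampling path: for all t' ∈ [0,1], c·(α(t)·x₁ + σ(t)·x₀) ≠ α(t')·x₁ + σ(t')·x₀. -/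
/-!
Comparing coefficients of `x₁` and `x₀` (linear independence), a rescaled point
`c • x_t` lying at `x_{t'}` forces `c α(t) = α(t')` and `c σ(t) = σ(t')`.
At `t' = 1` this gives `c = 0` and then `α(1) = 0`. For `t' < 1` the scale `c` is
nonzero since `σ(t') > 0`, so it cancels in the signal-to-noise ratio: `ρ(t) = ρ(t')`, hence `t = t'` by
strict monotonicity, and then `c σ(t) = σ(t)` with `σ(t) > 0` gives `c = 1`.
-/

theorem eq_one_of_mul_scheduler_eq {α σ : ℝ → ℝ}
    (hσpos : ∀ t ∈ Set.Ico (0:ℝ) 1, 0 < σ t)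
    (hρ : StrictMonoOn (fun t => α t / σ t) (Set.Ico 0 1))
    {t t' c : ℝ} (ht : t ∈ Set.Ico (0:ℝ) 1) (ht' : t' ∈ Set.Ico (0:ℝ) 1)
    (hα : c * α t = α t') (hσ : c * σ t = σ t') : c = 1 := by
  have hσt := hσpos t ht
  have hc : c ≠ 0 := by
    rintro rfl
    exact (hσpos t' ht').ne' (by simpa using hσ.symm)
  have hratio : α t / σ t = α t' / σ t' := by
    rw [← hα, ← hσ, mul_div_mul_left _ _ hc]
  obtain rfl : t = t' := hρ.injOn ht ht' hratio
  simpa [hσt.ne'] using hσ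

/-- **Rescaled points leave the source sampling path.** If `x₀, x₁` are linearly
independent and `c ≠ 1`, then `c • (α t • x₁ + σ t • x₀)` for `t ∈ [0,1)` never lies
on the source path `{α t' • x₁ + σ t' • x₀ : t' ∈ [0,1]}`. -/
theorem rescaled_point_off_path
    {E : Type*} [AddCommGroup E] [Module ℝ E]
    (x₀ x₁ : E) (hindep : LinearIndependent ℝ ![x₀, x₁])
    (α σ : ℝ → ℝ)
    (hα1 : α 1 = 1) (hσ1 : σ 1 = 0)
    (hσpos : ∀ t ∈ Set.Ico (0:ℝ) 1, 0 < σ t)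
    (hρ : StrictMonoOn (fun t => α t / σ t) (Set.Ico 0 1)) :
    ∀ t ∈ Set.Ico (0:ℝ) 1, ∀ c : ℝ, c ≠ 1 →
      ∀ t' ∈ Set.Icc (0:ℝ) 1,
        c • (α t • x₁ + σ t • x₀) ≠ α t' • x₁ + σ t' • x₀ := by
  intro t ht c hc t' ht' heq
  obtain ⟨hσ, hα⟩ : c * σ t = σ t' ∧ c * α t = α t' := by
    refine hindep.eq_of_pair ?_
    rw [add_comm (σ t' • x₀), ← heq, smul_add, smul_smul, smul_smul, add_comm]
  rcases ht'.2.lt_or_eq with ht'1 | rfl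
  · exact hc (eq_one_of_mul_scheduler_eq hσpos hρ ht ⟨ht'.1, ht'1⟩ hα hσ)
  · have hc0 : c = 0 := by simpa [hσ1, (hσpos t ht).ne'] using hσ
    simp [hc0, hα1] at hα
end

section
/- Let n ≥ 1 be a natural number and C_0, …, C_n ∈ ℝ control points satisfying C_i < C_{i+1} for every 0 ≤ i ≤ n−1. Then the degree-n Bézier function B(λ) = Σ_{i=0}^n b_{i,n}(λ)·C_i is strictly increasing on the interval [0,1]: for all 0 ≤ λ₁ < λ₂ ≤ 1, B(λ₁) < B(λ₂). -/
open Polynomial Finset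

lemma bern_eval (n i : ℕ) (l : ℝ) :
    (bernsteinPolynomial ℝ n i).eval l = bern n i l := by
  simp only [bernsteinPolynomial, bern, eval_mul, eval_pow, eval_natCast, eval_sub, eval_one,
    eval_X]
  ring

lemma bezier_poly_deriv (n : ℕ) (hn : 1 ≤ n) (D : ℕ → ℝ) :
    Polynomial.derivative
        (∑ i ∈ range (n + 1), Polynomial.C (D i) * bernsteinPolynomial ℝ n i) =
      ∑ i ∈ range n,
        Polynomial.C ((n : ℝ) * (D (i + 1) - D i)) * bernsteinPolynomial ℝ (n - 1) i := by
  rw [map_sum, Finset.sum_range_succ']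
  simp only [Polynomial.derivative_C_mul, bernsteinPolynomial.derivative_succ,
    bernsteinPolynomial.derivative_zero]
  have tel :
      ∑ i ∈ range n,
          ((n : ℝ[X]) * Polynomial.C (D i) * bernsteinPolynomial ℝ (n - 1) i -
            (n : ℝ[X]) * Polynomial.C (D (i + 1)) * bernsteinPolynomial ℝ (n - 1) (i + 1)) =
        (n : ℝ[X]) * Polynomial.C (D 0) * bernsteinPolynomial ℝ (n - 1) 0 -
          (n : ℝ[X]) * Polynomial.C (D n) * bernsteinPolynomial ℝ (n - 1) n :=
    Finset.sum_range_sub'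
      (fun i => (n : ℝ[X]) * Polynomial.C (D i) * bernsteinPolynomial ℝ (n - 1) i) n
  have hzero : bernsteinPolynomial ℝ (n - 1) n = 0 :=
    bernsteinPolynomial.eq_zero_of_lt ℝ (Nat.sub_lt (by omega) one_pos)
  rw [hzero, mul_zero, sub_zero] at tel
  rw [Finset.sum_sub_distrib] at tel
  have hsum :
      ∑ i ∈ range n,
          Polynomial.C ((n : ℝ) * (D (i + 1) - D i)) * bernsteinPolynomial ℝ (n - 1) i =
        ∑ i ∈ range n,
          ((n : ℝ[X]) * Polynomial.C (D (i + 1)) * bernsteinPolynomial ℝ (n - 1) i -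
            (n : ℝ[X]) * Polynomial.C (D i) * bernsteinPolynomial ℝ (n - 1) i) := by
    refine Finset.sum_congr rfl fun i _ => ?_
    rw [Polynomial.C_mul, Polynomial.C_sub, map_natCast]
    ring
  rw [hsum, Finset.sum_sub_distrib]
  have hsum2 :
      ∑ i ∈ range n,
          Polynomial.C (D (i + 1)) *
            ((n : ℝ[X]) * (bernsteinPolynomial ℝ (n - 1) i - bernsteinPolynomial ℝ (n - 1) (i + 1))) =
        ∑ i ∈ range n, (n : ℝ[X]) * Polynomial.C (D (i + 1)) * bernsteinPolynomial ℝ (n - 1) i -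
          ∑ i ∈ range n,
            (n : ℝ[X]) * Polynomial.C (D (i + 1)) * bernsteinPolynomial ℝ (n - 1) (i + 1) := by
    rw [← Finset.sum_sub_distrib]
    refine Finset.sum_congr rfl fun i _ => ?_
    ring
  rw [hsum2]
  linear_combination tel

lemma bezier_hasDerivAt (n : ℕ) (hn : 1 ≤ n) (D : ℕ → ℝ) (l : ℝ) :
    HasDerivAt (fun x => ∑ i ∈ range (n + 1), bern n i x * D i)
      (∑ i ∈ range n, (n : ℝ) * (D (i + 1) - D i) * bern (n - 1) i l) l := by
  have h := (∑ i ∈ range (n + 1),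
      Polynomial.C (D i) * bernsteinPolynomial ℝ n i).hasDerivAt (𝕜 := ℝ) l
  rw [bezier_poly_deriv n hn D] at h
  have hval : ∀ x : ℝ,
      (∑ i ∈ range (n + 1), Polynomial.C (D i) * bernsteinPolynomial ℝ n i).eval x =
        ∑ i ∈ range (n + 1), bern n i x * D i := by
    intro x
    rw [Polynomial.eval_finset_sum]
    exact Finset.sum_congr rfl fun i _ => by rw [eval_mul, eval_C, bern_eval]; ring
  have hdval :
      (∑ i ∈ range n,
          Polynomial.C ((n : ℝ) * (D (i + 1) - D i)) * bernsteinPolynomial ℝ (n - 1) i).eval l =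
        ∑ i ∈ range n, (n : ℝ) * (D (i + 1) - D i) * bern (n - 1) i l := by
    rw [Polynomial.eval_finset_sum]
    exact Finset.sum_congr rfl fun i _ => by rw [eval_mul, eval_C, bern_eval]
  rw [hdval] at h
  exact h.congr_of_eventuallyEq (Filter.Eventually.of_forall fun x => (hval x).symm)

lemma bern_pos {n i : ℕ} (hi : i ≤ n) {l : ℝ} (h0 : 0 < l) (h1 : l < 1) :
    0 < bern n i l := by
  have : 0 < (n.choose i : ℝ) := by
    exact_mod_cast Nat.choose_pos hi
  exact mul_pos (mul_pos this (pow_pos (by linarith) _)) (pow_pos h0 _)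

/-- **Strict monotonicity of Bézier functions with strictly increasing control points.** -/
theorem bezier_strictMonoOn (n : ℕ) (hn : 1 ≤ n) (C : Fin (n + 1) → ℝ)
    (hC : ∀ i : Fin n, C i.castSucc < C i.succ) :
    ∀ l₁ l₂ : ℝ, 0 ≤ l₁ → l₁ < l₂ → l₂ ≤ 1 →
      (∑ i : Fin (n + 1), bern n i.val l₁ * C i) <
        ∑ i : Fin (n + 1), bern n i.val l₂ * C i := by
  set D : ℕ → ℝ := fun i => if h : i < n + 1 then C ⟨i, h⟩ else 0 with hD
  set F : ℝ → ℝ := fun x => ∑ i ∈ range (n + 1), bern n i x * D i with hF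
  have hconv : ∀ l : ℝ, (∑ i : Fin (n + 1), bern n i.val l * C i) = F l := by
    intro l
    show _ = ∑ i ∈ range (n + 1), bern n i l * D i
    rw [Finset.sum_range fun i => bern n i l * D i]
    refine Finset.sum_congr rfl fun i _ => ?_
    simp [hD, i.isLt]
    intro h
    exact absurd i.isLt (by omega)
  have hstep : ∀ i ∈ range n, 0 < D (i + 1) - D i := by
    intro i hi
    rw [Finset.mem_range] at hi
    have h1 : i < n + 1 := by omega
    have h2 : i + 1 < n + 1 := by omega
    have := hC ⟨i, hi⟩
    simp only [hD, dif_pos h1, dif_pos h2]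
    have e1 : (⟨i, h1⟩ : Fin (n + 1)) = (⟨i, hi⟩ : Fin n).castSucc := rfl
    have e2 : (⟨i + 1, h2⟩ : Fin (n + 1)) = (⟨i, hi⟩ : Fin n).succ := rfl
    rw [e1, e2]
    linarith
  have hcont : ContinuousOn F (Set.Icc 0 1) := by
    have : Continuous F := by
      apply continuous_finset_sum
      intro i _
      unfold bern
      fun_prop
    exact this.continuousOn
  have hmono : StrictMonoOn F (Set.Icc (0 : ℝ) 1) := by
    apply strictMonoOn_of_deriv_pos (convex_Icc 0 1) hcont
    intro x hx
    rw [interior_Icc] at hx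
    rw [(bezier_hasDerivAt n hn D x).deriv]
    apply Finset.sum_pos
    · intro i hi
      rw [Finset.mem_range] at hi
      refine mul_pos (mul_pos ?_ (hstep i (Finset.mem_range.mpr hi)))
        (bern_pos (by omega) hx.1 hx.2)
      exact_mod_cast hn
    · exact Finset.nonempty_range_iff.mpr (by omega)
  intro l₁ l₂ h0 hlt h1
  rw [hconv l₁, hconv l₂]
  exact hmono ⟨h0, by linarith⟩ ⟨by linarith, h1⟩ hlt
end
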